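/- arXiv:1705.04019 — 5 statements merged into one kernel-verified Lean document; each statement's English description precedes it below -/
import Mathlib

section
/- Any 2-coloring of the edges of the complete graph on 18 vertices contains a monochromatic complete subgraph on 4 vertices (i.e., R(4,4) ≤ 18). -/
/-!
Greenwood–Gleason: in a graph with no `(k+1)`-clique and no `(l+1)`-independent set, the
neighbourhood of a vertex has no `k`-clique and its non-neighbourhood no `l`-independent set,
whence `R(k+1, l+1) ≤ R(k, l+1) + R(k+1, l)`. The inequality is strict when both summands are
even, since otherwise every vertex of a graph on `R(k, l+1) + R(k+1, l) - 1` (an odd number of)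
vertices would have odd degree. Thus `R(3,3) ≤ 3 + 3`, `R(3,4) ≤ 4 + 6 - 1` and
`R(4,4) ≤ 9 + 9`.
-/

open Finset

namespace SimpleGraph

variable {V : Type*} (G : SimpleGraph V) [DecidableRel G.Adj]

theorem even_sum_card_filter_adj (s : Finset V) : Even (∑ a ∈ s, #{b ∈ s | G.Adj a b}) := by
  have hdeg (a : s) : (G.induce (s : Set V)).degree a = #{b ∈ s | G.Adj a b} := by
    rw [← card_neighborFinset_eq_degree, neighborFinset_eq_filter, ← card_map (.subtype _)]
    congr 1
    ext b
    simp [and_comm]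
  rw [← sum_coe_sort, ← Fintype.sum_congr _ _ hdeg, sum_degrees_eq_twice_card_edges]
  exact even_two_mul _

theorem card_filter_adj_add_card_filter_compl_adj [DecidableEq V] {s : Finset V} {a : V}
    (ha : a ∈ s) :
    #{b ∈ s | G.Adj a b} + #{b ∈ s | Gᶜ.Adj a b} + 1 = #s := by
  have hG : ({b ∈ s | G.Adj a b} : Finset V) = {b ∈ s.erase a | G.Adj a b} := by
    ext b
    simp only [mem_filter, mem_erase]
    exact ⟨fun h => ⟨⟨(G.ne_of_adj h.2).symm, h.1⟩, h.2⟩, fun h => ⟨h.1.2, h.2⟩⟩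
  have hGc : ({b ∈ s | Gᶜ.Adj a b} : Finset V) = {b ∈ s.erase a | ¬G.Adj a b} := by
    ext b
    simp only [mem_filter, mem_erase, compl_adj]
    exact ⟨fun h => ⟨⟨h.2.1.symm, h.1⟩, h.2.2⟩, fun h => ⟨h.1.2, h.1.1.symm, h.2⟩⟩
  rw [hG, hGc, card_filter_add_card_filter_not, card_erase_add_one ha]

end SimpleGraph

open SimpleGraph

/-- Every `s` spanning neither a `k`-clique of `G` nor an `l`-clique of `Gᶜ` has at most `n`
elements; that is, `R(k, l) ≤ n + 1`. -/
def RamseyGraphCardLE (k l n : ℕ) : Prop :=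
  ∀ ⦃V : Type⦄ (G : SimpleGraph V) (s : Finset V),
    G.CliqueFreeOn s k → Gᶜ.CliqueFreeOn s l → #s ≤ n

namespace RamseyGraphCardLE

variable {k l m n : ℕ}

theorem symm (h : RamseyGraphCardLE k l n) : RamseyGraphCardLE l k n := fun _ G s hG hGc =>
  h Gᶜ s hGc (by rwa [compl_compl])

theorem two_succ (l : ℕ) : RamseyGraphCardLE 2 (l + 1) l := by
  intro V G s hG hGc
  by_contra! hl
  refine CliqueFreeOn.mono _ hl hGc (subset_refl _) ⟨?_, rfl⟩
  intro a ha b hb hab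
  exact (compl_adj G a b).2 ⟨hab, (cliqueFreeOn_two G).1 hG ha hb hab⟩

theorem card_filter_adj_le (h : RamseyGraphCardLE k l n) {V : Type} [DecidableEq V]
    {G : SimpleGraph V} [DecidableRel G.Adj] {s : Finset V} {a : V} (ha : a ∈ s)
    (hG : G.CliqueFreeOn s (k + 1)) (hGc : Gᶜ.CliqueFreeOn s l) :
    #{b ∈ s | G.Adj a b} ≤ n := by
  refine h G _ ?_ (CliqueFreeOn.subset _ (coe_subset.2 (filter_subset _ _)) hGc)
  convert CliqueFreeOn.of_succ _ hG ha using 1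
  ext b
  simp

theorem card_filter_compl_adj_le (h : RamseyGraphCardLE k l n) {V : Type} [DecidableEq V]
    {G : SimpleGraph V} [DecidableRel G.Adj] {s : Finset V} {a : V} (ha : a ∈ s)
    (hG : G.CliqueFreeOn s k) (hGc : Gᶜ.CliqueFreeOn s (l + 1)) :
    #{b ∈ s | Gᶜ.Adj a b} ≤ n :=
  h.symm.card_filter_adj_le ha hGc (by rwa [compl_compl])

theorem succ_succ (h₁ : RamseyGraphCardLE k (l + 1) m) (h₂ : RamseyGraphCardLE (k + 1) l n) :
    RamseyGraphCardLE (k + 1) (l + 1) (m + n + 1) := by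
  classical
  intro V G s hG hGc
  obtain rfl | ⟨a, ha⟩ := s.eq_empty_or_nonempty
  · simp
  have hred := h₁.card_filter_adj_le ha hG hGc
  have hblue := h₂.card_filter_compl_adj_le ha hG hGc
  have := G.card_filter_adj_add_card_filter_compl_adj ha
  omega

theorem succ_succ_of_odd (h₁ : RamseyGraphCardLE k (l + 1) m)
    (h₂ : RamseyGraphCardLE (k + 1) l n) (hm : Odd m) (hn : Odd n) :
    RamseyGraphCardLE (k + 1) (l + 1) (m + n) := by
  classical
  intro V G s hG hGc
  have hs := succ_succ h₁ h₂ G s hG hGc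
  by_contra! hlt
  -- Then `#s = m + n + 1` is odd and every vertex has odd `G`-degree `m`.
  have hdeg : ∀ a ∈ s, #{b ∈ s | G.Adj a b} = m := by
    intro a ha
    have hred := h₁.card_filter_adj_le ha hG hGc
    have hblue := h₂.card_filter_compl_adj_le ha hG hGc
    have := G.card_filter_adj_add_card_filter_compl_adj ha
    omega
  have hcard : #s = m + n + 1 := by omega
  have hsum := G.even_sum_card_filter_adj s
  rw [sum_congr rfl hdeg, sum_const, smul_eq_mul, hcard] at hsum
  exact Nat.not_even_iff_odd.2 ((hm.add_odd hn).add_one.mul hm) hsum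

theorem three_three : RamseyGraphCardLE 3 3 5 :=
  succ_succ (two_succ 2) (two_succ 2).symm

theorem three_four : RamseyGraphCardLE 3 4 8 :=
  succ_succ_of_odd (two_succ 3) three_three (by decide) (by decide)

theorem four_four : RamseyGraphCardLE 4 4 17 :=
  succ_succ three_four three_four.symm

end RamseyGraphCardLE

theorem exists_monochromatic_of_ramseyGraphCardLE {k n : ℕ} (h : RamseyGraphCardLE k k n)
    {V : Type} [Fintype V] (hV : n < Fintype.card V) (c : V → V → Bool)
    (hc : ∀ i j, c i j = c j i) :
    ∃ (S : Finset V) (b : Bool), #S = k ∧ ∀ i ∈ S, ∀ j ∈ S, i ≠ j → c i j = b := by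
  let G := SimpleGraph.fromRel fun i j => c i j = true
  have hadj (i j : V) : G.Adj i j ↔ i ≠ j ∧ c i j = true := by
    simp [G, hc j i]
  have hfree : ¬ (G.CliqueFreeOn (univ : Finset V) k ∧ Gᶜ.CliqueFreeOn (univ : Finset V) k) :=
    fun ⟨hr, hb⟩ => (h G univ hr hb).not_gt hV
  simp only [CliqueFreeOn, not_and_or, not_forall, not_not] at hfree
  rcases hfree with ⟨S, -, hS⟩ | ⟨S, -, hS⟩
  · refine ⟨S, true, hS.card_eq, fun i hi j hj hij => ((hadj i j).1 (hS.isClique hi hj hij)).2⟩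
  · refine ⟨S, false, hS.card_eq, fun i hi j hj hij => ?_⟩
    have := ((compl_adj G i j).1 (hS.isClique hi hj hij)).2
    simpa [hadj, hij] using this

theorem ramsey_four_four_le_eighteen
    (c : Fin 18 → Fin 18 → Bool)
    (hc : ∀ i j, c i j = c j i) :
    ∃ (S : Finset (Fin 18)) (b : Bool), S.card = 4 ∧
      ∀ i ∈ S, ∀ j ∈ S, i ≠ j → c i j = b :=
  exists_monochromatic_of_ramseyGraphCardLE RamseyGraphCardLE.four_four (by simp) c hc
end

section
/- Let P19 be a 19×19 Seidel matrix. Then there exist a diagonal ±1 matrix T and an index set S of size 5 containing index 0 such that the principal submatrix of T·P19·T on S equals K5 or -K5. -/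
open Matrix

section RamseyAux

variable {α : Type*} [DecidableEq α]

def Mono (f : α → α → Bool) (b : Bool) (s : Finset α) : Prop :=
  ∀ i ∈ s, ∀ j ∈ s, i ≠ j → f i j = b

lemma triangle_of_pair {f : α → α → Bool} (hf : ∀ i j, f i j = f j i)
    {b : Bool} {v : α} {N : Finset α} (hvN : v ∉ N) (hNb : ∀ w ∈ N, f v w = b)
    {i j : α} (hi : i ∈ N) (hj : j ∈ N) (hij : i ≠ j) (hb : f i j = b) :
    ∃ t, t ⊆ insert v N ∧ t.card = 3 ∧ Mono f b t := by
  refine ⟨{v, i, j}, ?_, ?_, ?_⟩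
  · intro x hx
    simp only [Finset.mem_insert, Finset.mem_singleton] at hx ⊢
    rcases hx with h | h | h
    · exact Or.inl h
    · exact Or.inr (h ▸ hi)
    · exact Or.inr (h ▸ hj)
  · rw [Finset.card_insert_of_notMem, Finset.card_insert_of_notMem]
    · simp
    · simpa using hij
    · simp only [Finset.mem_insert, Finset.mem_singleton]
      rintro (rfl | rfl) <;> [exact hvN hi; exact hvN hj]
  · intro x hx y hy hxy
    simp only [Finset.mem_insert, Finset.mem_singleton] at hx hy
    rcases hx with rfl | rfl | rfl <;> rcases hy with rfl | rfl | rfl <;>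
      first
        | exact absurd rfl hxy
        | exact hNb _ hi
        | exact hNb _ hj
        | exact (hf _ _).trans (hNb _ hi)
        | exact (hf _ _).trans (hNb _ hj)
        | exact hb
        | exact (hf _ _).trans hb

lemma mono_of_no_pair {f : α → α → Bool} {b : Bool} {s : Finset α}
    (h : ∀ i ∈ s, ∀ j ∈ s, i ≠ j → f i j ≠ b) : Mono f (!b) s := by
  intro i hi j hj hij
  have := h i hi j hj hij
  cases hb : f i j <;> cases b <;> simp_all

lemma mono_mono {f : α → α → Bool} {b : Bool} {s t : Finset α} (hst : s ⊆ t)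
    (h : Mono f b t) : Mono f b s := fun i hi j hj hij => h i (hst hi) j (hst hj) hij

lemma split (f : α → α → Bool) (v : α) (V : Finset α) (hv : v ∈ V) :
    ((V.erase v).filter (fun w => f v w = true)).card +
      ((V.erase v).filter (fun w => f v w = false)).card = V.card - 1 := by
  have h := Finset.card_filter_add_card_filter_not
    (s := V.erase v) (p := fun w => f v w = true)
  rw [Finset.card_erase_of_mem hv] at h
  rw [← h]
  congr 1
  apply congrArg
  apply Finset.filter_congr
  intro x _
  simp [Bool.not_eq_true]

lemma R33 {f : α → α → Bool} (hf : ∀ i j, f i j = f j i) (V : Finset α)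
    (hV : 6 ≤ V.card) :
    ∃ b s, s ⊆ V ∧ s.card = 3 ∧ Mono f b s := by
  obtain ⟨v, hv⟩ : V.Nonempty := Finset.card_pos.mp (by omega)
  have hsum := split f v V hv
  have hbig : ∃ b : Bool, 3 ≤ ((V.erase v).filter (fun w => f v w = b)).card := by
    by_contra h
    push_neg at h
    have h1 := h true
    have h2 := h false
    omega
  obtain ⟨b, hb⟩ := hbig
  set N := (V.erase v).filter (fun w => f v w = b) with hN
  have hNV : N ⊆ V := (Finset.filter_subset _ _).trans (Finset.erase_subset _ _)
  have hvN : v ∉ N := fun h => Finset.notMem_erase v V (Finset.filter_subset _ _ h)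
  have hNb : ∀ w ∈ N, f v w = b := fun w hw => by
    simpa using (Finset.mem_filter.mp hw).2
  by_cases hpair : ∃ i ∈ N, ∃ j ∈ N, i ≠ j ∧ f i j = b
  · obtain ⟨i, hi, j, hj, hij, hfb⟩ := hpair
    obtain ⟨t, ht, hc, hm⟩ := triangle_of_pair hf hvN hNb hi hj hij hfb
    exact ⟨b, t, ht.trans (Finset.insert_subset hv hNV), hc, hm⟩
  · push_neg at hpair
    obtain ⟨s, hsN, hsc⟩ := Finset.exists_subset_card_eq hb
    refine ⟨!b, s, hsN.trans hNV, hsc, ?_⟩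
    exact mono_of_no_pair (fun i hi j hj hij => hpair i (hsN hi) j (hsN hj) hij)

lemma even_sum_deg [LinearOrder α] {f : α → α → Bool} (hf : ∀ i j, f i j = f j i)
    (W : Finset α) :
    Even (∑ v ∈ W, ((W.erase v).filter (fun w => f v w = true)).card) := by
  classical
  set E := (W ×ˢ W).filter (fun p => p.1 ≠ p.2 ∧ f p.1 p.2 = true) with hE
  have hfib : ∀ p ∈ E, p.1 ∈ W := fun p hp =>
    (Finset.mem_product.mp (Finset.mem_of_mem_filter _ hp)).1
  have hcard : E.card = ∑ v ∈ W, ((W.erase v).filter (fun w => f v w = true)).card := by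
    rw [Finset.card_eq_sum_card_fiberwise hfib]
    apply Finset.sum_congr rfl
    intro v hv
    refine Finset.card_bij' (fun p _ => p.2) (fun w _ => (v, w)) ?_ ?_ ?_ ?_
    case _ =>
      intro p hp
      simp only [Finset.mem_filter, Finset.mem_product, hE, Finset.mem_erase] at hp ⊢
      obtain ⟨⟨⟨h1, h2⟩, h3, h4⟩, h5⟩ := hp
      subst h5
      exact ⟨⟨Ne.symm h3, h2⟩, h4⟩
    case _ =>
      intro w hw
      simp only [Finset.mem_filter, Finset.mem_erase, hE, Finset.mem_product] at hw ⊢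
      exact ⟨⟨⟨hv, hw.1.2⟩, Ne.symm hw.1.1, hw.2⟩, trivial⟩
    case _ =>
      intro p hp
      simp only [Finset.mem_filter] at hp
      exact Prod.ext hp.2.symm rfl
    case _ =>
      intro w hw
      rfl
  rw [← hcard]
  have hsplit := Finset.card_filter_add_card_filter_not
    (s := E) (p := fun p => p.1 < p.2)
  have hbij : (E.filter (fun p => p.1 < p.2)).card
      = (E.filter (fun p => ¬ p.1 < p.2)).card := by
    apply Finset.card_bij' (fun p _ => Prod.swap p) (fun p _ => Prod.swap p)
    · intro p hp
      simp only [Finset.mem_filter, hE, Finset.mem_product, Prod.fst_swap, Prod.snd_swap] at hp ⊢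
      obtain ⟨⟨⟨h1, h2⟩, h3, h4⟩, h5⟩ := hp
      exact ⟨⟨⟨h2, h1⟩, Ne.symm h3, (hf _ _).symm.trans h4⟩, not_lt.mpr h5.le⟩
    · intro p hp
      simp only [Finset.mem_filter, hE, Finset.mem_product, Prod.fst_swap, Prod.snd_swap] at hp ⊢
      obtain ⟨⟨⟨h1, h2⟩, h3, h4⟩, h5⟩ := hp
      exact ⟨⟨⟨h2, h1⟩, Ne.symm h3, (hf _ _).symm.trans h4⟩, lt_of_le_of_ne (not_lt.mp h5) h3.symm⟩
    · intro p _; exact Prod.swap_swap p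
    · intro p _; exact Prod.swap_swap p
  exact ⟨(E.filter (fun p => p.1 < p.2)).card, by omega⟩

lemma R34 [LinearOrder α] {f : α → α → Bool} (hf : ∀ i j, f i j = f j i)
    (V : Finset α) (hV : 9 ≤ V.card) :
    (∃ s, s ⊆ V ∧ s.card = 3 ∧ Mono f true s) ∨
      (∃ s, s ⊆ V ∧ s.card = 4 ∧ Mono f false s) := by
  by_contra hcon
  push_neg at hcon
  obtain ⟨h3, h4⟩ := hcon
  obtain ⟨W, hWV, hWc⟩ := Finset.exists_subset_card_eq hV
  have h3' : ∀ s, s ⊆ W → s.card = 3 → ¬ Mono f true s :=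
    fun s hs hc => h3 s (hs.trans hWV) hc
  have h4' : ∀ s, s ⊆ W → s.card = 4 → ¬ Mono f false s :=
    fun s hs hc => h4 s (hs.trans hWV) hc
  have hdeg : ∀ v ∈ W, ((W.erase v).filter (fun w => f v w = true)).card = 3 := by
    intro v hv
    have hsum := split f v W hv
    have hT : ((W.erase v).filter (fun w => f v w = true)).card ≤ 3 := by
      by_contra hT
      push_neg at hT
      set N := (W.erase v).filter (fun w => f v w = true) with hN
      obtain ⟨s, hsN, hsc⟩ := Finset.exists_subset_card_eq (show 4 ≤ N.card by omega)
      have hNW : N ⊆ W := (Finset.filter_subset _ _).trans (Finset.erase_subset _ _)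
      have hvN : v ∉ N := fun h => Finset.notMem_erase v W (Finset.filter_subset _ _ h)
      have hNb : ∀ w ∈ N, f v w = true := fun w hw => (Finset.mem_filter.mp hw).2
      by_cases hpair : ∃ i ∈ s, ∃ j ∈ s, i ≠ j ∧ f i j = true
      · obtain ⟨i, hi, j, hj, hij, hfb⟩ := hpair
        obtain ⟨t, ht, hc, hm⟩ := triangle_of_pair hf hvN hNb (hsN hi) (hsN hj) hij hfb
        exact h3' t (ht.trans (Finset.insert_subset hv hNW)) hc hm
      · push_neg at hpair
        exact h4' s (hsN.trans hNW) hsc (mono_of_no_pair hpair)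
    have hF : ((W.erase v).filter (fun w => f v w = false)).card ≤ 5 := by
      by_contra hF
      push_neg at hF
      set N := (W.erase v).filter (fun w => f v w = false) with hN
      have hNW : N ⊆ W := (Finset.filter_subset _ _).trans (Finset.erase_subset _ _)
      have hvN : v ∉ N := fun h => Finset.notMem_erase v W (Finset.filter_subset _ _ h)
      have hNb : ∀ w ∈ N, f v w = false := fun w hw => (Finset.mem_filter.mp hw).2
      obtain ⟨b, t, htN, htc, htm⟩ := R33 hf N (by omega)
      cases b with
      | true => exact h3' t (htN.trans hNW) htc htm
      | false =>
        have hvt : v ∉ t := fun h => hvN (htN h)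
        refine h4' (insert v t) (Finset.insert_subset hv (htN.trans hNW))
          (by rw [Finset.card_insert_of_notMem hvt, htc]) ?_
        intro x hx y hy hxy
        simp only [Finset.mem_insert] at hx hy
        rcases hx with rfl | hx <;> rcases hy with rfl | hy
        · exact absurd rfl hxy
        · exact hNb _ (htN hy)
        · exact (hf _ _).trans (hNb _ (htN hx))
        · exact htm x hx y hy hxy
    omega
  have heven := even_sum_deg hf W
  rw [Finset.sum_congr rfl hdeg, Finset.sum_const, hWc] at heven
  obtain ⟨k, hk⟩ := heven
  simp only [smul_eq_mul] at hk
  omega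

lemma R44 [LinearOrder α] {f : α → α → Bool} (hf : ∀ i j, f i j = f j i)
    (V : Finset α) (hV : 18 ≤ V.card) :
    ∃ b s, s ⊆ V ∧ s.card = 4 ∧ Mono f b s := by
  obtain ⟨v, hv⟩ : V.Nonempty := Finset.card_pos.mp (by omega)
  have hsum := split f v V hv
  have key : ∀ b : Bool, 9 ≤ ((V.erase v).filter (fun w => f v w = b)).card →
      ∃ b' s, s ⊆ V ∧ s.card = 4 ∧ Mono f b' s := by
    intro b hb
    set N := (V.erase v).filter (fun w => f v w = b) with hN
    have hNV : N ⊆ V := (Finset.filter_subset _ _).trans (Finset.erase_subset _ _)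
    have hvN : v ∉ N := fun h => Finset.notMem_erase v V (Finset.filter_subset _ _ h)
    have hNb : ∀ w ∈ N, f v w = b := fun w hw => (Finset.mem_filter.mp hw).2
    set g : α → α → Bool := fun i j => if b then f i j else !(f i j) with hg
    have hgf : ∀ i j, g i j = g j i := by
      intro i j; simp only [hg, hf i j]
    have hgb : ∀ i j, g i j = true ↔ f i j = b := by
      intro i j; cases b <;> simp [hg]
    have hgb' : ∀ i j, g i j = false ↔ f i j = !b := by
      intro i j; cases b <;> simp [hg]
    rcases R34 hgf N hb with ⟨t, htN, htc, htm⟩ | ⟨s, hsN, hsc, hsm⟩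
    · -- triangle of color b inside N; add v
      have hvt : v ∉ t := fun h => hvN (htN h)
      refine ⟨b, insert v t, Finset.insert_subset hv (htN.trans hNV),
        by rw [Finset.card_insert_of_notMem hvt, htc], ?_⟩
      intro x hx y hy hxy
      simp only [Finset.mem_insert] at hx hy
      rcases hx with rfl | hx <;> rcases hy with rfl | hy
      · exact absurd rfl hxy
      · exact hNb _ (htN hy)
      · exact (hf _ _).trans (hNb _ (htN hx))
      · exact (hgb _ _).mp (htm x hx y hy hxy)
    · exact ⟨!b, s, hsN.trans hNV, hsc, fun x hx y hy hxy =>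
        (hgb' _ _).mp (hsm x hx y hy hxy)⟩
  rcases le_or_gt 9 ((V.erase v).filter (fun w => f v w = true)).card with h | h
  · exact key true h
  · exact key false (by omega)

end RamseyAux

def K5 : Matrix (Fin 5) (Fin 5) ℤ := fun i j => if i = j then 0 else 1

theorem seidel19_contains_K5_or_negK5
    (P : Matrix (Fin 19) (Fin 19) ℤ)
    (hsymm : P.IsSymm)
    (hdiag : ∀ i, P i i = 0)
    (hoff : ∀ i j, i ≠ j → P i j = 1 ∨ P i j = -1) :
    ∃ (ε : Fin 19 → ℤ) (e : Fin 5 → Fin 19),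
      (∀ i, ε i = 1 ∨ ε i = -1) ∧ Function.Injective e ∧ e 0 = 0 ∧
      ((Matrix.diagonal ε * P * Matrix.diagonal ε).submatrix e e = K5 ∨
       (Matrix.diagonal ε * P * Matrix.diagonal ε).submatrix e e = -K5) := by
  classical
  have hPsym : ∀ i j, P i j = P j i := fun i j => hsymm.apply j i
  set f : Fin 19 → Fin 19 → Bool := fun i j => decide (P 0 i * P i j * P 0 j = 1)
    with hfdef
  have hf : ∀ i j, f i j = f j i := by
    intro i j
    have h : P 0 i * P i j * P 0 j = P 0 j * P j i * P 0 i := by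
      rw [hPsym i j]; ring
    simp only [hfdef, h]
  have hVc : ((Finset.univ : Finset (Fin 19)).erase 0).card = 18 := by
    rw [Finset.card_erase_of_mem (Finset.mem_univ _)]
    simp
  obtain ⟨b, s, hsV, hs4, hmono⟩ := R44 hf ((Finset.univ : Finset (Fin 19)).erase 0)
    (by omega)
  have hne : ∀ w ∈ s, w ≠ 0 := fun w hw => Finset.ne_of_mem_erase (hsV hw)
  have hsq : ∀ w : Fin 19, w ≠ 0 → P 0 w * P 0 w = 1 := by
    intro w hw
    rcases hoff 0 w (Ne.symm hw) with h | h <;> rw [h] <;> norm_num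
  set c : ℤ := if b then 1 else -1 with hcdef
  have hval : ∀ x ∈ s, ∀ y ∈ s, x ≠ y → P 0 x * P x y * P 0 y = c := by
    intro x hx y hy hxy
    have hm := hmono x hx y hy hxy
    cases b with
    | true =>
      simp only [hfdef, decide_eq_true_eq] at hm
      simpa [hcdef] using hm
    | false =>
      have hm' : ¬ (P 0 x * P x y * P 0 y = 1) := by
        simpa [hfdef] using hm
      have hpm : P 0 x * P x y * P 0 y = 1 ∨ P 0 x * P x y * P 0 y = -1 := by
        rcases hoff 0 x (Ne.symm (hne x hx)) with h1 | h1 <;>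
          rcases hoff x y hxy with h2 | h2 <;>
            rcases hoff 0 y (Ne.symm (hne y hy)) with h3 | h3 <;>
              rw [h1, h2, h3] <;> norm_num
      rcases hpm with h | h
      · exact absurd h hm'
      · simpa [hcdef] using h
  set ε : Fin 19 → ℤ := fun i => if i = 0 then c else P 0 i with hεdef
  have hε1 : ∀ i, ε i = 1 ∨ ε i = -1 := by
    intro i
    by_cases hi : i = 0
    · simp only [hεdef, if_pos hi, hcdef]
      cases b <;> simp
    · simp only [hεdef, if_neg hi]
      exact hoff 0 i (Ne.symm hi)
  set t : Fin 4 → Fin 19 := fun i => ((s.orderIsoOfFin hs4) i : Fin 19) with htdef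
  have tmem : ∀ i, t i ∈ s := fun i => ((s.orderIsoOfFin hs4) i).2
  have tinj : Function.Injective t := fun i j h =>
    (s.orderIsoOfFin hs4).injective (Subtype.ext h)
  set e : Fin 5 → Fin 19 := Fin.cons 0 t with hedef
  have einj : Function.Injective e := by
    rw [hedef]
    apply Fin.cons_injective_of_injective _ tinj
    rintro ⟨i, hi⟩
    exact hne (t i) (tmem i) hi
  refine ⟨ε, e, hε1, einj, rfl, ?_⟩
  have hent : ∀ i j : Fin 5,
      (Matrix.diagonal ε * P * Matrix.diagonal ε).submatrix e e i j
        = if i = j then 0 else c := by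
    intro i j
    rw [Matrix.submatrix_apply, Matrix.mul_diagonal, Matrix.diagonal_mul]
    by_cases hij : i = j
    · subst hij
      simp [hdiag]
    · have hee : e i ≠ e j := fun h => hij (einj h)
      rw [if_neg hij]
      induction i using Fin.cases with
      | zero =>
        induction j using Fin.cases with
        | zero => exact absurd rfl hij
        | succ j' =>
          have hw := hne (t j') (tmem j')
          simp only [hedef, Fin.cons_zero, Fin.cons_succ, hεdef, if_pos rfl,
            if_neg hw]
          rw [mul_assoc, hsq _ hw, mul_one]
      | succ i' =>
        induction j using Fin.cases with
        | zero =>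
          have hw := hne (t i') (tmem i')
          simp only [hedef, Fin.cons_zero, Fin.cons_succ, hεdef, if_pos rfl,
            if_neg hw]
          rw [hPsym (t i') 0, hsq _ hw, one_mul]
        | succ j' =>
          have hw1 := hne (t i') (tmem i')
          have hw2 := hne (t j') (tmem j')
          have htij : t i' ≠ t j' := by
            intro h
            apply hee
            simp only [hedef, Fin.cons_succ, h]
          simp only [hedef, Fin.cons_succ, hεdef, if_neg hw1, if_neg hw2]
          exact hval _ (tmem i') _ (tmem j') htij
  cases b with
  | true =>
    left
    ext i j
    rw [hent i j]
    simp only [hcdef, if_true, K5]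
  | false =>
    right
    ext i j
    rw [hent i j]
    simp only [hcdef, if_false, K5, Matrix.neg_apply]
    split <;> norm_num
end

section
/- The 11×11 matrix M11 (given explicitly, with zero diagonal and ±1 off-diagonal entries) has determinant 57122 = 2·13⁴. -/
def M11 : Matrix (Fin 11) (Fin 11) ℤ :=
  !![0,1,-1,1,1,-1,1,-1,1,-1,-1;
     1,0,1,1,-1,1,-1,1,1,-1,-1;
     -1,1,0,1,1,1,-1,1,-1,-1,-1;
     1,1,1,0,1,1,1,-1,-1,-1,1;
     1,-1,1,1,0,1,1,-1,-1,1,-1;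
     -1,1,1,1,1,0,1,1,1,1,1;
     1,-1,-1,1,1,1,0,1,1,1,1;
     -1,1,1,-1,-1,1,1,0,1,1,-1;
     1,1,-1,-1,-1,1,1,1,0,-1,1;
     -1,-1,-1,-1,1,1,1,1,-1,0,-1;
     -1,-1,-1,1,-1,1,1,-1,1,-1,0]

/-! `M11 0 0 = 0`, so swap the first two rows; fraction-free Gaussian elimination then stays in
`ℤ` and yields a lower-triangular `elimLower` with `elimLower * M11' = elimUpper` upper
triangular. Comparing products of diagonals gives `det M11' = -1245186483840 / 21798720 = -57122`,
and the swap flips the sign. -/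

namespace Matrix

variable {m R : Type*} [Fintype m] [DecidableEq m] [LinearOrder m] [CommRing R]

theorem prod_diag_mul_det_eq_of_mul_eq {L M U : Matrix m m R} (hL : L.IsLowerTriangular)
    (hU : U.IsUpperTriangular) (h : L * M = U) : (∏ i, L i i) * M.det = ∏ i, U i i := by
  rw [← det_of_isLowerTriangular L hL, ← det_of_isUpperTriangular hU, ← det_mul, h]

end Matrix

namespace M11

def elimLower : Matrix (Fin 11) (Fin 11) ℤ :=
  !![1, 0, 0, 0, 0, 0, 0, 0, 0, 0, 0;
     0, 1, 0, 0, 0, 0, 0, 0, 0, 0, 0;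
     1, -1, 1, 0, 0, 0, 0, 0, 0, 0, 0;
     -3, -1, -1, 2, 0, 0, 0, 0, 0, 0, 0;
     -7, 1, 1, 3, 5, 0, 0, 0, 0, 0, 0;
     -1, 7, -17, -3, -1, 12, 0, 0, 0, 0, 0;
     19, -17, -25, -1, -39, 33, 29, 0, 0, 0, 0;
     61, -47, -103, -7, -129, 123, 113, 18, 0, 0, 0;
     -21, -19, 25, -9, 33, 9, -37, -39, 29, 0, 0;
     5, 3, -1, 1, -1, -1, -3, -1, -1, 4, 0;
     -3, -5, -1, 3, -3, 3, 1, -3, 1, -3, 3]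

def elimUpper : Matrix (Fin 11) (Fin 11) ℤ :=
  !![1, 0, 1, 1, -1, 1, -1, 1, 1, -1, -1;
     0, 1, -1, 1, 1, -1, 1, -1, 1, -1, -1;
     0, 0, 2, 1, -1, 3, -3, 3, -1, -1, -1;
     0, 0, 0, -5, 3, -1, 5, -5, -5, 3, 7;
     0, 0, 0, 0, 12, 1, 15, -15, -15, 7, 3;
     0, 0, 0, 0, 0, -29, 33, -9, 39, 25, 21;
     0, 0, 0, 0, 0, 0, -18, 113, 129, 47, 123;
     0, 0, 0, 0, 0, 0, 0, 377, 507, 221, 429;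
     0, 0, 0, 0, 0, 0, 0, 0, -156, -39, 13;
     0, 0, 0, 0, 0, 0, 0, 0, 0, -13, -13;
     0, 0, 0, 0, 0, 0, 0, 0, 0, 0, 26]

theorem isLowerTriangular_elimLower : elimLower.IsLowerTriangular := by
  decide +kernel +revert

theorem isUpperTriangular_elimUpper : elimUpper.IsUpperTriangular := by
  decide +kernel +revert

theorem elimLower_mul_submatrix_swap :
    elimLower * M11.submatrix (Equiv.swap 0 1) id = elimUpper := by
  decide

theorem prod_diag_elimLower : ∏ i, elimLower i i = 21798720 := by
  decide

theorem prod_diag_elimUpper : ∏ i, elimUpper i i = -1245186483840 := by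
  decide

end M11

theorem M11_det : M11.det = 57122 ∧ (57122 : ℤ) = 2 * 13 ^ 4 := by
  refine ⟨?_, by norm_num⟩
  have hswap : (M11.submatrix (Equiv.swap 0 1) id).det = -57122 := by
    have h := Matrix.prod_diag_mul_det_eq_of_mul_eq M11.isLowerTriangular_elimLower
      M11.isUpperTriangular_elimUpper M11.elimLower_mul_submatrix_swap
    rw [M11.prod_diag_elimLower, M11.prod_diag_elimUpper] at h
    linarith
  rw [Matrix.det_permute, Equiv.Perm.sign_swap (by decide)] at hswap
  simpa using hswap
end

section
/- The characteristic polynomial of the explicit 11×11 matrix M11 is -(x-2)(x+1)²(x²-13)⁴. -/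
open Polynomial

def Am : Matrix (Fin 11) (Fin 11) ℤ := !![-3, 0, 0, 2, -4, 1, 1, 2, -4, 1, 1;
    -1, 0, 1, 1, -1, -4, 4, 1, -1, -4, 4;
    1, 0, -1, 3, -5, -1, 3, 3, -5, -1, 3;
    1, -1, 0, 5, -6, -3, 6, 5, -6, -3, 6;
    -1, 1, 0, 3, -4, -4, 7, 3, -4, -4, 7;
    1, 1, 1, 5, -7, -1, 4, 5, -7, -1, 4;
    -1, -1, -1, 1, -3, -2, 5, 1, -3, -2, 5;
    -1, -1, -1, 2, 0, 0, 0, 2, 0, 0, 0;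
    -1, 1, 0, 0, 2, 0, 0, 0, 2, 0, 0;
    -1, 0, 1, 0, 0, 2, 0, 0, 0, 2, 0;
    3, 0, 0, 0, 0, 0, 2, 0, 0, 0, 2]

def Bm : Matrix (Fin 11) (Fin 11) ℤ := !![0, 0, 0, 0, 0, -1, 1, 0, 0, 1, -1;
    0, 0, 0, 1, -1, 0, 0, -1, 1, 0, 0;
    0, 0, 0, 1, -1, -1, 1, -1, 1, 1, -1;
    0, 0, 0, 1, -2, -1, 2, -1, 2, 1, -2;
    0, 0, 0, 1, -2, 0, 1, -1, 2, 0, -1;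
    0, 0, 0, 1, -1, -1, 2, -1, 1, 1, -2;
    0, 0, 0, 1, -1, 0, 1, -1, 1, 0, -1;
    0, 0, 0, 0, 0, 0, 0, 0, 0, 0, 0;
    0, 0, 0, 0, 0, 0, 0, 0, 0, 0, 0;
    0, 0, 0, 0, 0, 0, 0, 0, 0, 0, 0;
    0, 0, 0, 0, 0, 0, 0, 0, 0, 0, 0]

def Cm : Matrix (Fin 11) (Fin 11) ℤ := !![-156, -52, 52, 52, -52, 52, -52, -52, -52, -52, 156;
    0, -156, 156, -312, 312, 156, -156, -156, 312, -156, 0;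
    0, 312, -312, 156, -156, 156, -156, -156, -156, 312, 0;
    -39, 26, -26, -26, 26, 91, -91, 260, 26, 26, 39;
    -39, 26, -26, 91, -91, -26, 26, 26, 260, 26, 39;
    -39, -91, 91, -26, 26, -26, 26, 26, 26, 260, 39;
    117, 39, -39, -39, 39, -39, 39, 39, 39, 39, 234;
    -39, 26, -26, -26, 26, 91, -91, 260, 26, 26, 39;
    -39, 26, -26, 91, -91, -26, 26, 26, 260, 26, 39;
    -39, -91, 91, -26, 26, -26, 26, 26, 26, 260, 39;
    117, 39, -39, -39, 39, -39, 39, 39, 39, 39, 234]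

def Dm : Matrix (Fin 11) (Fin 11) ℤ := !![0, 0, 0, 0, 0, 0, 0, 0, 0, 0, 0;
    0, 0, 0, 0, 0, 0, 0, 0, 0, 0, 0;
    0, 0, 0, 0, 0, 0, 0, 0, 0, 0, 0;
    -33, 22, 32, -22, -32, 23, 31, 4, 22, 22, -21;
    21, 22, -22, -31, -23, 32, 22, 22, 4, -32, 33;
    -33, -23, -31, -22, 22, 32, 22, 22, -32, 4, -21;
    -9, -21, -33, 21, -21, 21, 33, -21, 33, -21, -18;
    33, -22, -32, 22, 32, -23, -31, -4, -22, -22, 21;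
    -21, -22, 22, 31, 23, -32, -22, -22, -4, 32, -33;
    33, 23, 31, 22, -22, -32, -22, -22, 32, -4, 21;
    9, 21, 33, -21, 21, -21, -33, 21, -33, 21, 18]

def d0 : Fin 11 → ℤ := ![2, -1, -1, 0, 0, 0, 0, 0, 0, 0, 0]
def d1 : Fin 11 → ℤ := ![0, 0, 0, 1, 1, 1, 1, -1, -1, -1, -1]

lemma e1 : Am * Cm + (13 : ℤ) • (Bm * Dm) = (1404 : ℤ) • 1 := by decide
lemma e2 : Am * Dm + Bm * Cm = 0 := by decide
lemma e3 : M11 * Am = Am * Matrix.diagonal d0 + (13 : ℤ) • (Bm * Matrix.diagonal d1) := by decide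
lemma e4 : M11 * Bm = Am * Matrix.diagonal d1 + Bm * Matrix.diagonal d0 := by decide

noncomputable section

abbrev fm : Matrix (Fin 11) (Fin 11) ℤ →+* Matrix (Fin 11) (Fin 11) ℝ :=
  (Int.castRingHom ℝ).mapMatrix

lemma map13 (X : Matrix (Fin 11) (Fin 11) ℤ) : fm ((13 : ℤ) • X) = (13 : ℝ) • fm X := by
  rw [map_zsmul, ← Int.cast_smul_eq_zsmul ℝ]
  norm_num

def dvec (r : ℝ) : Fin 11 → ℝ := fun i => ((d0 i : ℤ) : ℝ) + r * ((d1 i : ℤ) : ℝ)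

lemma hdiag (r : ℝ) :
    Matrix.diagonal (dvec r) =
      fm (Matrix.diagonal d0) + r • fm (Matrix.diagonal d1) := by
  have h0 : fm (Matrix.diagonal d0) = Matrix.diagonal (fun i => ((d0 i : ℤ) : ℝ)) := by
    simpa using Matrix.diagonal_map (f := (Int.cast : ℤ → ℝ)) (by simp) (d := d0)
  have h1 : fm (Matrix.diagonal d1) = Matrix.diagonal (fun i => ((d1 i : ℤ) : ℝ)) := by
    simpa using Matrix.diagonal_map (f := (Int.cast : ℤ → ℝ)) (by simp) (d := d1)
  rw [h0, h1, ← Matrix.diagonal_smul, Matrix.diagonal_add]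
  refine congrArg Matrix.diagonal ?_
  funext i
  simp only [dvec, Pi.add_apply, Pi.smul_apply, smul_eq_mul]
  try ring

lemma hPQ (r : ℝ) (hr : r ^ 2 = 13) :
    (fm Am + r • fm Bm) * ((1404 : ℝ)⁻¹ • (fm Cm + r • fm Dm)) = 1 := by
  have h1 : fm Am * fm Cm + (13 : ℝ) • (fm Bm * fm Dm) = (1404 : ℝ) • 1 := by
    have := congrArg fm e1
    rw [map_add, map_mul, map13, map_mul, map_zsmul, map_one,
      ← Int.cast_smul_eq_zsmul ℝ] at this
    norm_num at this
    convert this using 2 <;> norm_num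
  have h2 : fm Am * fm Dm + fm Bm * fm Cm = 0 := by
    have := congrArg fm e2
    rwa [map_add, map_mul, map_mul, map_zero] at this
  have hrr : r * r = (13 : ℝ) := by nlinarith [hr]
  rw [Matrix.mul_smul, mul_add, add_mul, add_mul, Matrix.smul_mul, Matrix.mul_smul,
    Matrix.smul_mul, Matrix.mul_smul, smul_smul, hrr]
  have key : fm Am * fm Cm + r • (fm Bm * fm Cm) + (r • (fm Am * fm Dm) + (13 : ℝ) • (fm Bm * fm Dm))
      = (fm Am * fm Cm + (13 : ℝ) • (fm Bm * fm Dm)) + r • (fm Am * fm Dm + fm Bm * fm Cm) := by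
    rw [smul_add]; abel
  rw [key, h1, h2, smul_zero, add_zero, smul_smul]
  norm_num

lemma hMP (r : ℝ) (hr : r ^ 2 = 13) :
    fm M11 * (fm Am + r • fm Bm) = (fm Am + r • fm Bm) * Matrix.diagonal (dvec r) := by
  have h3 : fm M11 * fm Am =
      fm Am * fm (Matrix.diagonal d0) + (13 : ℝ) • (fm Bm * fm (Matrix.diagonal d1)) := by
    have := congrArg fm e3
    rwa [map_mul, map_add, map_mul, map13, map_mul] at this
  have h4 : fm M11 * fm Bm =
      fm Am * fm (Matrix.diagonal d1) + fm Bm * fm (Matrix.diagonal d0) := by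
    have := congrArg fm e4
    rwa [map_mul, map_add, map_mul, map_mul] at this
  have hrr : r * r = (13 : ℝ) := by nlinarith [hr]
  rw [hdiag r, mul_add, Matrix.mul_smul, h3, h4, mul_add, add_mul, add_mul,
    Matrix.smul_mul, Matrix.mul_smul, Matrix.smul_mul, Matrix.mul_smul, smul_smul, hrr,
    smul_add]
  abel


lemma charpoly_conj {n R : Type*} [DecidableEq n] [Fintype n] [CommRing R]
    (P A Q : Matrix n n R) (hpq : P * Q = 1) :
    (P * A * Q).charpoly = A.charpoly := by
  set g : Matrix n n R →+* Matrix n n R[X] :=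
    (Polynomial.C : R →+* R[X]).mapMatrix with hg
  have hfPQ : g P * g Q = 1 := by rw [← map_mul, hpq, map_one]
  have key : Matrix.charmatrix (P * A * Q) = g P * Matrix.charmatrix A * g Q := by
    rw [Matrix.charmatrix, Matrix.charmatrix, mul_sub, sub_mul]
    congr 1
    · rw [Matrix.scalar_apply, ← Matrix.smul_one_eq_diagonal, Matrix.mul_smul,
        Matrix.smul_mul, mul_one, hfPQ]
    · rw [← hg, map_mul, map_mul]
  have hdet : (g P).det * (g Q).det = 1 := by
    rw [← Matrix.det_mul, hfPQ, Matrix.det_one]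
  unfold Matrix.charpoly
  rw [key, Matrix.det_mul, Matrix.det_mul]
  linear_combination (Matrix.charmatrix A).det * hdet

lemma hdiagc (r : ℝ) :
    (Matrix.diagonal (dvec r)).charpoly = ∏ i : Fin 11, (X - C (dvec r i)) := by
  rw [Matrix.charpoly_of_upperTriangular _ (Matrix.blockTriangular_diagonal _)]
  simp

lemma hprod (r : ℝ) (hr : r ^ 2 = 13) :
    (∏ i : Fin 11, (X - C (dvec r i)))
      = ((X - 2) * (X + 1) ^ 2 * (X ^ 2 - 13) ^ 4 : ℤ[X]).map (Int.castRingHom ℝ) := by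
  have hc : (C r : ℝ[X]) ^ 2 = 13 := by
    rw [← map_pow, hr]
    exact map_ofNat C 13
  simp only [Fin.prod_univ_succ, Fin.prod_univ_zero, dvec, d0, d1, Matrix.cons_val_zero,
    Matrix.cons_val_one, Matrix.head_cons, Matrix.cons_val_succ,
    Int.cast_ofNat, Int.cast_neg, Int.cast_one, Int.cast_zero, Int.cast_two,
    mul_zero, add_zero, zero_add, mul_one, mul_neg_one, mul_neg,
    Polynomial.map_mul, Polynomial.map_pow, Polynomial.map_sub, Polynomial.map_add,
    Polynomial.map_ofNat, Polynomial.map_one, Polynomial.map_X, map_neg, map_ofNat,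
    map_one, mul_one]
  linear_combination (-(X - 2) * (X + 1) ^ 2 *
    ((X ^ 2 - (C r) ^ 2) ^ 3 + (X ^ 2 - (C r) ^ 2) ^ 2 * (X ^ 2 - 13)
      + (X ^ 2 - (C r) ^ 2) * (X ^ 2 - 13) ^ 2 + (X ^ 2 - 13) ^ 3)) * hc

lemma hmain : (fm M11).charpoly
    = ((X - 2) * (X + 1) ^ 2 * (X ^ 2 - 13) ^ 4 : ℤ[X]).map (Int.castRingHom ℝ) := by
  set r := Real.sqrt 13 with hrdef
  have hr : r ^ 2 = 13 := Real.sq_sqrt (by norm_num)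
  set P' := fm Am + r • fm Bm with hP'
  set Q' := (1404 : ℝ)⁻¹ • (fm Cm + r • fm Dm) with hQ'
  have hpq : P' * Q' = 1 := hPQ r hr
  have hmp : fm M11 * P' = P' * Matrix.diagonal (dvec r) := hMP r hr
  have hN : fm M11 = P' * Matrix.diagonal (dvec r) * Q' := by
    calc fm M11 = fm M11 * (P' * Q') := by rw [hpq, mul_one]
      _ = (fm M11 * P') * Q' := by rw [mul_assoc]
      _ = P' * Matrix.diagonal (dvec r) * Q' := by rw [hmp]
  rw [hN, charpoly_conj _ _ _ hpq, hdiagc, hprod r hr]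

theorem M11_charpoly :
    -M11.charpoly = -(X - 2) * (X + 1) ^ 2 * (X ^ 2 - 13) ^ 4 := by
  have hcm : (fm M11).charpoly = M11.charpoly.map (Int.castRingHom ℝ) := by
    have := Matrix.charpoly_map M11 (Int.castRingHom ℝ)
    simpa [RingHom.mapMatrix_apply] using this
  have hfin : M11.charpoly = (X - 2) * (X + 1) ^ 2 * (X ^ 2 - 13) ^ 4 :=
    Polynomial.map_injective _ Int.cast_injective (by rw [← hcm, hmain])
  rw [hfin]
  ring

end
end

section
/- The 8×8 matrix P1625 with rows (0,-1,-1,-1,-1,1,-1,-1), (-1,0,-1,1,1,1,-1,1), (-1,-1,0,-1,-1,-1,-1,1), (-1,1,-1,0,-1,1,1,1), (-1,1,-1,-1,0,-1,-1,-1), (1,1,-1,1,-1,0,-1,1), (-1,-1,-1,1,-1,-1,0,-1), (-1,1,1,1,-1,1,-1,0) has determinant 1625 = 13·5³. -/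
def P1625 : Matrix (Fin 8) (Fin 8) ℤ :=
  !![0,-1,-1,-1,-1,1,-1,-1;
     -1,0,-1,1,1,1,-1,1;
     -1,-1,0,-1,-1,-1,-1,1;
     -1,1,-1,0,-1,1,1,1;
     -1,1,-1,-1,0,-1,-1,-1;
     1,1,-1,1,-1,0,-1,1;
     -1,-1,-1,1,-1,-1,0,-1;
     -1,1,1,1,-1,1,-1,0]

/-!
Since `P1625 0 0 = 0`, first add row 1 to row 0, which keeps the determinant. The resulting
matrix has nonsingular leading principal minors, so integer column operations given by an upper
triangular matrix with diagonal `1, 1, 1, 2, 5, 4, 3, 6` make it lower triangular with diagonal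
`-1, 1, 2, -5, 12, -15, 10, -65`; hence `det P1625 * 720 = 1170000`.
-/

namespace Matrix

theorem det_mul_prod_diag_eq_prod_diag {n R : Type*} [Fintype n] [DecidableEq n] [LinearOrder n]
    [CommRing R] {A B C : Matrix n n R} (h : A * B = C) (hB : B.IsUpperTriangular)
    (hC : C.IsLowerTriangular) : A.det * ∏ i, B i i = ∏ i, C i i := by
  rw [← det_of_isUpperTriangular hB, ← det_of_isLowerTriangular C hC, ← det_mul, h]

end Matrix

-- Column `j` is orthogonal to the first `j` rows of `P1625.updateRow 0 (P1625 0 + P1625 1)`.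
def P1625ColumnOps : Matrix (Fin 8) (Fin 8) ℤ :=
  !![1,-1,-1,1,-1,-3,1,9;
     0,1,-1,-3,3,1,-3,-7;
     0,0,1,1,-1,5,-5,-17;
     0,0,0,2,-7,-5,1,-7;
     0,0,0,0,5,3,1,9;
     0,0,0,0,0,4,-3,-7;
     0,0,0,0,0,0,3,9;
     0,0,0,0,0,0,0,6]

def P1625LowerForm : Matrix (Fin 8) (Fin 8) ℤ :=
  !![-1,0,0,0,0,0,0,0;
     -1,1,0,0,0,0,0,0;
     -1,0,2,0,0,0,0,0;
     -1,2,-1,-5,0,0,0,0;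
     -1,2,-1,-7,12,0,0,0;
     1,0,-3,-1,-9,-15,0,0;
     -1,0,1,3,-13,-15,10,0;
     -1,2,1,-1,-9,5,-15,-65]

theorem P1625_updateRow_mul_columnOps :
    P1625.updateRow 0 (P1625 0 + P1625 1) * P1625ColumnOps = P1625LowerForm := by
  decide

theorem P1625_det : P1625.det = 1625 ∧ (1625 : ℤ) = 13 * 5 ^ 3 := by
  refine ⟨?_, by norm_num⟩
  have h := Matrix.det_mul_prod_diag_eq_prod_diag P1625_updateRow_mul_columnOps
    (by decide) (by decide)
  rw [Matrix.det_updateRow_add_self P1625 (by decide : (0 : Fin 8) ≠ 1)] at h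
  rw [show ∏ i, P1625ColumnOps i i = 720 by decide,
    show ∏ i, P1625LowerForm i i = 1170000 by decide] at h
  omega
end
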